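/- arXiv:2502.02109 — 3 statements merged into one kernel-verified Lean document; each statement's English description precedes it below -/
import Mathlib

section
/- Let X be a nonempty measurable space and ν a Markov kernel from X to ℝ such that for every x the measure ν(x) has a finite second moment. Define the conditional mean f*(x) = ∫ y dν(x)(y) and the conditional variance V(x) = ∫ (y − f*(x))² dν(x)(y). Then the worst-case risk of f*, i.e., the supremum over all probability measures m on X of ∫ (y − f*(x))² d(m ⊗ ν)(x, y) (integrals taken in the extended nonnegative reals), equals ⨆_{x ∈ X} V(x), the supremum of the conditional variance. -/
/-!
Disintegrating `m ⊗ₘ ν` turns the risk of any predictor into the `m`-average of its pointwise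
risk `x ↦ ∫⁻ y, ℓ(x, y) ∂ν x`, so the supremum over input distributions is the supremum over
Dirac masses. For the conditional mean the pointwise squared risk is the conditional variance:
the finite second moment makes `(y - f*(x))²` integrable, so its Bochner and Lebesgue integrals
agree.
-/

open MeasureTheory ProbabilityTheory

namespace MeasureTheory

theorem iSup_lintegral_probabilityMeasure_eq_iSup {X : Type*} [MeasurableSpace X]
    {g : X → ENNReal} (hg : Measurable g) :
    ⨆ (m : Measure X) (_ : IsProbabilityMeasure m), ∫⁻ x, g x ∂m = ⨆ x, g x := by
  refine le_antisymm (iSup₂_le fun m _ => ?_) (iSup_le fun x => ?_)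
  · exact lintegral_le_const (.of_forall fun x => le_iSup g x)
  · calc g x = ∫⁻ x', g x' ∂Measure.dirac x := (lintegral_dirac' x hg).symm
      _ ≤ _ := le_iSup₂ (f := fun (m : Measure X) (_ : IsProbabilityMeasure m) => ∫⁻ x, g x ∂m)
          (Measure.dirac x) inferInstance

theorem Measure.iSup_lintegral_compProd_eq_iSup {X Y : Type*} [MeasurableSpace X]
    [MeasurableSpace Y] (κ : Kernel X Y) [IsSFiniteKernel κ] {f : X × Y → ENNReal}
    (hf : Measurable f) :
    ⨆ (m : Measure X) (_ : IsProbabilityMeasure m), ∫⁻ p, f p ∂(m ⊗ₘ κ)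
      = ⨆ x, ∫⁻ y, f (x, y) ∂κ x := by
  simp_rw [Measure.lintegral_compProd hf]
  exact iSup_lintegral_probabilityMeasure_eq_iSup hf.lintegral_kernel_prod_right'

theorem integrable_sub_const_sq {μ : Measure ℝ} [IsFiniteMeasure μ]
    (h : Integrable (fun y => y ^ 2) μ) (c : ℝ) : Integrable (fun y => (y - c) ^ 2) μ := by
  have hid : MemLp id 2 μ := (memLp_two_iff_integrable_sq aestronglyMeasurable_id).2 h
  exact (memLp_two_iff_integrable_sq (by fun_prop)).1 (hid.sub (memLp_const c))

theorem lintegral_ofReal_sub_const_sq {μ : Measure ℝ} [IsFiniteMeasure μ]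
    (h : Integrable (fun y => y ^ 2) μ) (c : ℝ) :
    ∫⁻ y, ENNReal.ofReal ((y - c) ^ 2) ∂μ = ENNReal.ofReal (∫ y, (y - c) ^ 2 ∂μ) :=
  (ofReal_integral_eq_lintegral_ofReal (integrable_sub_const_sq h c)
    (.of_forall fun _ => sq_nonneg _)).symm

end MeasureTheory

theorem worst_case_risk_of_conditional_mean_general
    {X : Type*} [MeasurableSpace X]
    (ν : Kernel X ℝ) [IsMarkovKernel ν]
    (hν : ∀ x, Integrable (fun y => y ^ 2) (ν x))
    (fstar : X → ℝ) (hfstar : ∀ x, fstar x = ∫ y, y ∂ν x)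
    (V : X → ℝ) (hV : ∀ x, V x = ∫ y, (y - fstar x) ^ 2 ∂ν x) :
    (⨆ (m : Measure X) (_ : IsProbabilityMeasure m),
        ∫⁻ p : X × ℝ, ENNReal.ofReal ((p.2 - fstar p.1) ^ 2) ∂(m ⊗ₘ ν))
      = ⨆ x : X, ENNReal.ofReal (V x) := by
  have hfstar_meas : Measurable fstar := by
    rw [funext hfstar]
    exact (stronglyMeasurable_id.integral_kernel (κ := ν)).measurable
  rw [Measure.iSup_lintegral_compProd_eq_iSup ν (by fun_prop)]
  simp_rw [lintegral_ofReal_sub_const_sq (hν _), hV]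

/-- The worst-case risk of the conditional-mean predictor `fstar` equals the supremum of
the conditional variance: for a Markov kernel `ν` from `X` to `ℝ` with finite second
moments, conditional mean `fstar` and conditional variance `V`, the supremum over all
probability measures `m` on `X` of `∫⁻ (y - fstar x)² d(m ⊗ₘ ν)` (in the extended
nonnegative reals) equals `⨆ x, V x`. -/
theorem worst_case_risk_of_conditional_mean
    {X : Type*} [MeasurableSpace X] [Nonempty X]
    (ν : Kernel X ℝ) [IsMarkovKernel ν]
    (hν : ∀ x, Integrable (fun y => y ^ 2) (ν x))
    (fstar : X → ℝ) (hfstar : ∀ x, fstar x = ∫ y, y ∂ν x)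
    (V : X → ℝ) (hV : ∀ x, V x = ∫ y, (y - fstar x) ^ 2 ∂ν x) :
    (⨆ (m : Measure X) (_ : IsProbabilityMeasure m),
        ∫⁻ p : X × ℝ, ENNReal.ofReal ((p.2 - fstar p.1) ^ 2) ∂(m ⊗ₘ ν))
      = ⨆ x : X, ENNReal.ofReal (V x) :=
  worst_case_risk_of_conditional_mean_general ν hν fstar hfstar V hV
end

section
/- (Theorem 1, minimax optimality of the causal predictor.) Let X be a nonempty measurable space and ν a Markov kernel from X to ℝ such that for every x the measure ν(x) has a finite second moment. Define the conditional mean f*(x) = ∫ y dν(x)(y). Then for every measurable f : X → ℝ, ⨆_{m} ∫ (y − f*(x))² d(m ⊗ ν)(x, y) ≤ ⨆_{m} ∫ (y − f(x))² d(m ⊗ ν)(x, y), where both suprema range over all probability measures m on X and the integrals of the nonnegative integrands are taken in the extended nonnegative reals. That is, f* minimizes the worst-case expected squared prediction error over the class of all joint distributions obtained by fixing the conditional law ν of the outcome given its causal parents and varying the marginal law of the parents arbitrarily. -/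
/-!
Disintegrating `m ⊗ₘ ν` along `X`, the risk of a predictor `f` is the `m`-average of the squared
deviation of `ν x` around `f x`. The squared deviation around any constant `c` is at least the
variance (which is shift invariant and bounded by the second moment), and the variance is the
squared deviation around the mean. So `fstar` beats `f` for every `m` separately, and a fortiori
in the worst case.
-/

open MeasureTheory ProbabilityTheory

namespace ProbabilityTheory

variable {Ω : Type*} {mΩ : MeasurableSpace Ω} {μ : Measure Ω} [IsProbabilityMeasure μ]
  {X : Ω → ℝ}

lemma evariance_sub_const (hX : AEStronglyMeasurable X μ) (c : ℝ) :
    eVar[fun ω ↦ X ω - c; μ] = eVar[X; μ] := by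
  by_cases hXL : MemLp X 2 μ
  · have hXcL : MemLp (fun ω ↦ X ω - c) 2 μ := hXL.sub (memLp_const c)
    rw [← ofReal_variance hXL, ← ofReal_variance hXcL, variance_sub_const hX c]
  · have hXcL : ¬MemLp (fun ω ↦ X ω - c) 2 μ := fun h ↦
      hXL (by convert h.add (memLp_const c) using 1; ext; simp)
    rw [evariance_eq_top (by fun_prop) hXcL, evariance_eq_top hX hXL]

lemma evariance_le_lintegral_sq_sub (hX : AEStronglyMeasurable X μ) (c : ℝ) :
    eVar[X; μ] ≤ ∫⁻ ω, ENNReal.ofReal ((X ω - c) ^ 2) ∂μ := by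
  rw [← evariance_sub_const hX c, evariance_def' (by fun_prop)]
  refine tsub_le_self.trans_eq (lintegral_congr fun ω ↦ ?_)
  rw [← enorm_pow, Real.enorm_of_nonneg (sq_nonneg _)]

end ProbabilityTheory

lemma lintegral_sq_sub_kernel_mean_le_compProd {X : Type*} [MeasurableSpace X]
    (ν : Kernel X ℝ) [IsMarkovKernel ν] (m : Measure X) [SFinite m]
    {f : X → ℝ} (hf : Measurable f) :
    ∫⁻ p : X × ℝ, ENNReal.ofReal ((p.2 - ∫ y, y ∂ν p.1) ^ 2) ∂(m ⊗ₘ ν)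
      ≤ ∫⁻ p : X × ℝ, ENNReal.ofReal ((p.2 - f p.1) ^ 2) ∂(m ⊗ₘ ν) := by
  have hmean : Measurable fun x ↦ ∫ y, y ∂ν x :=
    (stronglyMeasurable_id.integral_kernel (κ := ν)).measurable
  have hloss {g : X → ℝ} (hg : Measurable g) :
      Measurable fun p : X × ℝ ↦ ENNReal.ofReal ((p.2 - g p.1) ^ 2) := by
    fun_prop
  rw [Measure.lintegral_compProd (hloss hmean), Measure.lintegral_compProd (hloss hf)]
  refine lintegral_mono fun x ↦ ?_
  simpa [evariance_eq_lintegral_ofReal] using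
    evariance_le_lintegral_sq_sub (μ := ν x) aestronglyMeasurable_id (f x)

theorem minimax_optimality_of_causal_predictor_general
    {X : Type*} [MeasurableSpace X]
    (ν : Kernel X ℝ) [IsMarkovKernel ν]
    (fstar : X → ℝ) (hfstar : ∀ x, fstar x = ∫ y, y ∂ν x) :
    ∀ f : X → ℝ, Measurable f →
      (⨆ (m : Measure X) (_ : IsProbabilityMeasure m),
          ∫⁻ p : X × ℝ, ENNReal.ofReal ((p.2 - fstar p.1) ^ 2) ∂(m ⊗ₘ ν))
        ≤ ⨆ (m : Measure X) (_ : IsProbabilityMeasure m),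
            ∫⁻ p : X × ℝ, ENNReal.ofReal ((p.2 - f p.1) ^ 2) ∂(m ⊗ₘ ν) := by
  intro f hf
  obtain rfl : fstar = fun x ↦ ∫ y, y ∂ν x := funext hfstar
  exact iSup_mono fun m ↦ iSup_mono fun _ ↦ lintegral_sq_sub_kernel_mean_le_compProd ν m hf

/-- Theorem 1 (minimax optimality of the causal predictor): for a Markov kernel `ν` from
`X` to `ℝ` with finite second moments and conditional mean `fstar x = ∫ y ∂ν x`, for
every measurable `f : X → ℝ`, the worst-case risk of `fstar` over all probability
measures `m` on `X` (marginals of the causal parents, with the mechanism `ν` fixed) is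
at most the worst-case risk of `f`, risks taken in the extended nonnegative reals. -/
theorem minimax_optimality_of_causal_predictor
    {X : Type*} [MeasurableSpace X] [Nonempty X]
    (ν : Kernel X ℝ) [IsMarkovKernel ν]
    (hν : ∀ x, Integrable (fun y => y ^ 2) (ν x))
    (fstar : X → ℝ) (hfstar : ∀ x, fstar x = ∫ y, y ∂ν x) :
    ∀ f : X → ℝ, Measurable f →
      (⨆ (m : Measure X) (_ : IsProbabilityMeasure m),
          ∫⁻ p : X × ℝ, ENNReal.ofReal ((p.2 - fstar p.1) ^ 2) ∂(m ⊗ₘ ν))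
        ≤ ⨆ (m : Measure X) (_ : IsProbabilityMeasure m),
            ∫⁻ p : X × ℝ, ENNReal.ofReal ((p.2 - f p.1) ^ 2) ∂(m ⊗ₘ ν) :=
  minimax_optimality_of_causal_predictor_general ν fstar hfstar
end

section
/- Let X be a nonempty measurable space, ν a Markov kernel from X to ℝ with finite second moments (∫ y² dν(x)(y) < ∞ for all x), f*(x) = ∫ y dν(x)(y) the conditional mean, and V(x) = ∫ (y − f*(x))² dν(x)(y) the conditional variance. Then for every measurable f : X → ℝ and every x ∈ X, the worst-case risk of f, ⨆_{m} ∫ (y − f(x'))² d(m ⊗ ν)(x', y) (supremum over all probability measures m on X, integrals in the extended nonnegative reals), is at least V(x); consequently the worst-case risk of any measurable predictor is bounded below by ⨆_{x ∈ X} V(x). -/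
/-!
A point mass at `x` is an admissible intervention. Under it the risk of `f` is the mean squared
error `∫ (y - f x)² dν(x)`, and no constant predicts `ν(x)` better than its mean, whose error is
the variance `V x`.
-/

open MeasureTheory ProbabilityTheory

lemma ProbabilityTheory.ofReal_variance_le_lintegral_sq_sub {Ω : Type*} [MeasurableSpace Ω]
    {μ : Measure Ω} [IsProbabilityMeasure μ] {X : Ω → ℝ} (hX : AEStronglyMeasurable X μ) (c : ℝ) :
    ENNReal.ofReal Var[X; μ] ≤ ∫⁻ ω, ENNReal.ofReal ((X ω - c) ^ 2) ∂μ := by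
  have hsq_nonneg : 0 ≤ᵐ[μ] fun ω ↦ (X ω - c) ^ 2 := .of_forall fun _ ↦ sq_nonneg _
  have hsq_meas : AEStronglyMeasurable (fun ω ↦ (X ω - c) ^ 2) μ := by fun_prop
  calc ENNReal.ofReal Var[X; μ]
      = ENNReal.ofReal Var[fun ω ↦ X ω - c; μ] := by rw [variance_sub_const hX]
    _ ≤ ENNReal.ofReal (∫ ω, (X ω - c) ^ 2 ∂μ) :=
        ENNReal.ofReal_le_ofReal (variance_le_expectation_sq (by fun_prop))
    _ = ENNReal.ofReal (∫⁻ ω, ENNReal.ofReal ((X ω - c) ^ 2) ∂μ).toReal := by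
        rw [integral_eq_lintegral_of_nonneg_ae hsq_nonneg hsq_meas]
    _ ≤ ∫⁻ ω, ENNReal.ofReal ((X ω - c) ^ 2) ∂μ := ENNReal.ofReal_toReal_le

lemma MeasureTheory.Measure.lintegral_dirac_compProd {α β : Type*} [MeasurableSpace α]
    [MeasurableSpace β] {κ : Kernel α β} [IsSFiniteKernel κ] {g : α × β → ENNReal}
    (hg : Measurable g) (a : α) :
    ∫⁻ p, g p ∂(Measure.dirac a ⊗ₘ κ) = ∫⁻ b, g (a, b) ∂κ a := by
  rw [Measure.lintegral_compProd hg, lintegral_dirac' _ hg.lintegral_kernel_prod_right']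

theorem worst_case_risk_lower_bound_general
    {X : Type*} [MeasurableSpace X]
    (ν : Kernel X ℝ) [IsMarkovKernel ν]
    (fstar : X → ℝ) (hfstar : ∀ x, fstar x = ∫ y, y ∂ν x)
    (V : X → ℝ) (hV : ∀ x, V x = ∫ y, (y - fstar x) ^ 2 ∂ν x) :
    ∀ f : X → ℝ, Measurable f →
      (∀ x : X, ENNReal.ofReal (V x)
          ≤ ⨆ (m : Measure X) (_ : IsProbabilityMeasure m),
              ∫⁻ p : X × ℝ, ENNReal.ofReal ((p.2 - f p.1) ^ 2) ∂(m ⊗ₘ ν))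
      ∧ (⨆ x : X, ENNReal.ofReal (V x))
          ≤ ⨆ (m : Measure X) (_ : IsProbabilityMeasure m),
              ∫⁻ p : X × ℝ, ENNReal.ofReal ((p.2 - f p.1) ^ 2) ∂(m ⊗ₘ ν) := by
  intro f hf
  have hloss : Measurable fun p : X × ℝ ↦ ENNReal.ofReal ((p.2 - f p.1) ^ 2) := by fun_prop
  have hV_eq_variance (x : X) : V x = Var[id; ν x] := by
    rw [hV, hfstar, variance_eq_integral aemeasurable_id]
    rfl
  have hpointwise (x : X) : ENNReal.ofReal (V x)
      ≤ ⨆ (m : Measure X) (_ : IsProbabilityMeasure m),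
          ∫⁻ p : X × ℝ, ENNReal.ofReal ((p.2 - f p.1) ^ 2) ∂(m ⊗ₘ ν) := by
    refine le_iSup₂_of_le (Measure.dirac x) inferInstance ?_
    rw [Measure.lintegral_dirac_compProd hloss, hV_eq_variance]
    exact ofReal_variance_le_lintegral_sq_sub aestronglyMeasurable_id (f x)
  exact ⟨hpointwise, iSup_le hpointwise⟩

/-- Lower bound on the worst-case risk: for a Markov kernel `ν` from `X` to `ℝ` with
finite second moments, conditional mean `fstar` and conditional variance `V`, the
worst-case risk of any measurable predictor `f` (supremum over all probability measures
`m` on `X` of `∫⁻ (y - f x')² d(m ⊗ₘ ν)`, in the extended nonnegative reals) is at least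
`V x` for every `x`; consequently it is bounded below by `⨆ x, V x`. -/
theorem worst_case_risk_lower_bound
    {X : Type*} [MeasurableSpace X] [Nonempty X]
    (ν : Kernel X ℝ) [IsMarkovKernel ν]
    (hν : ∀ x, Integrable (fun y => y ^ 2) (ν x))
    (fstar : X → ℝ) (hfstar : ∀ x, fstar x = ∫ y, y ∂ν x)
    (V : X → ℝ) (hV : ∀ x, V x = ∫ y, (y - fstar x) ^ 2 ∂ν x) :
    ∀ f : X → ℝ, Measurable f →
      (∀ x : X, ENNReal.ofReal (V x)
          ≤ ⨆ (m : Measure X) (_ : IsProbabilityMeasure m),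
              ∫⁻ p : X × ℝ, ENNReal.ofReal ((p.2 - f p.1) ^ 2) ∂(m ⊗ₘ ν))
      ∧ (⨆ x : X, ENNReal.ofReal (V x))
          ≤ ⨆ (m : Measure X) (_ : IsProbabilityMeasure m),
              ∫⁻ p : X × ℝ, ENNReal.ofReal ((p.2 - f p.1) ^ 2) ∂(m ⊗ₘ ν) :=
  worst_case_risk_lower_bound_general ν fstar hfstar V hV
end
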